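/- arXiv:2512.03990 — 2 statements merged into one kernel-verified Lean document; each statement's English description precedes it below -/
import Mathlib

section
/- Let n ∈ ℕ, λ, b, k_C ∈ ℝ with b ≠ 0, Γ > 0. Let y, y_d : ℝ → ℝ be twice differentiable, f, ε : ℝ → ℝ, μ : ℝ → ℝⁿ, W ∈ ℝⁿ a constant vector, and Ŵ : ℝ → ℝⁿ differentiable. Define e = y − y_d, s = e' + λe, the uncertainty Δ(t) = ⟨W, μ(t)⟩ + ε(t), its estimate Δ̂(t) = ⟨Ŵ(t), μ(t)⟩, and suppose: (i) y''(t) = f(t) + b·u(t) + Δ(t) with u(t) = b⁻¹(−f(t) − Δ̂(t) + y_d''(t) − k_C·s(t) − λ·e'(t)); (ii) the updating rule Ŵ'(t) = Γ·μ(t)·s(t) holds. Then the Lyapunov function V(t) = ½(s(t)² + Γ⁻¹‖Ŵ(t) − W‖²) is differentiable and satisfies V'(t) = s(t)·(−k_C·s(t) + ε(t)) for all t. -/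
/-!
Along closed-loop trajectories the control law cancels `f` and turns the sliding variable into
`ṡ = Δ - Δ̂ - k_C s = -⟪Ŵ - W, μ⟫ + ε - k_C s`. Differentiating `V` gives
`s ṡ + Γ⁻¹ ⟪Ŵ - W, Ŵ'⟫`, and the update rule `Ŵ' = Γ μ s` makes the second term equal to
`s ⟪Ŵ - W, μ⟫`, which cancels the weight-error term of `s ṡ`.
-/

open RealInnerProductSpace

theorem hasDerivAt_deriv_add_const_mul {e : ℝ → ℝ} {lam t : ℝ} (he : DifferentiableAt ℝ e t)
    (he' : DifferentiableAt ℝ (deriv e) t) :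
    HasDerivAt (fun x => deriv e x + lam * e x) (deriv (deriv e) t + lam * deriv e t) t :=
  he'.hasDerivAt.add (he.hasDerivAt.const_mul lam)

theorem sub_add_mul_eq_of_control_law {b lam k ddy ddyd de f u Δ Δhat s : ℝ} (hb : b ≠ 0)
    (hdyn : ddy = f + b * u + Δ) (hu : u = b⁻¹ * (-f - Δhat + ddyd - k * s - lam * de)) :
    ddy - ddyd + lam * de = Δ - Δhat - k * s := by
  rw [hdyn, hu, mul_inv_cancel_left₀ hb]
  ring

theorem HasDerivAt.half_sq_add_inv_mul_norm_sub_sq {E : Type*} [NormedAddCommGroup E]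
    [InnerProductSpace ℝ E] {s : ℝ → ℝ} {w : ℝ → E} {s' t Γ : ℝ} {w' W : E}
    (hs : HasDerivAt s s' t) (hw : HasDerivAt w w' t) :
    HasDerivAt (fun x => 1 / 2 * (s x ^ 2 + Γ⁻¹ * ‖w x - W‖ ^ 2))
      (s t * s' + Γ⁻¹ * ⟪w t - W, w'⟫) t := by
  refine (((hs.fun_pow 2).add ((hw.sub_const W).norm_sq.const_mul Γ⁻¹)).const_mul
    (1 / 2 : ℝ)).congr_deriv ?_
  push_cast
  ring

/-- Simple learning method: under the control law and update rule
`Ŵ' = Γ·μ·s`, the Lyapunov function `V = ½(s² + Γ⁻¹‖Ŵ − W‖²)` is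
differentiable with `V' = s·(−k_C·s + ε)`. -/
theorem stmt_4 (n : ℕ) (lam b k_C Γ : ℝ) (hb : b ≠ 0) (hΓ : 0 < Γ)
    (y y_d : ℝ → ℝ)
    (hy : Differentiable ℝ y) (hy' : Differentiable ℝ (deriv y))
    (hyd : Differentiable ℝ y_d) (hyd' : Differentiable ℝ (deriv y_d))
    (f ε u : ℝ → ℝ) (μ : ℝ → EuclideanSpace ℝ (Fin n))
    (W : EuclideanSpace ℝ (Fin n)) (What : ℝ → EuclideanSpace ℝ (Fin n))
    (hWhat : Differentiable ℝ What)
    (e s Δ Δhat V : ℝ → ℝ)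
    (he : e = fun t => y t - y_d t)
    (hs : s = fun t => deriv e t + lam * e t)
    (hΔ : Δ = fun t => (inner ℝ W (μ t) : ℝ) + ε t)
    (hΔhat : Δhat = fun t => (inner ℝ (What t) (μ t) : ℝ))
    (hdyn : ∀ t, deriv (deriv y) t = f t + b * u t + Δ t)
    (hu : ∀ t, u t = b⁻¹ * (-f t - Δhat t + deriv (deriv y_d) t
      - k_C * s t - lam * deriv e t))
    (hupd : ∀ t, deriv What t = (Γ * s t) • μ t)
    (hV : V = fun t => (1/2) * ((s t) ^ 2 + Γ⁻¹ * ‖What t - W‖ ^ 2)) :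
    ∀ t, HasDerivAt V (s t * (-k_C * s t + ε t)) t := by
  intro t
  have hde : deriv e = deriv y - deriv y_d := by
    funext x
    rw [he]
    exact deriv_sub (hy x) (hyd x)
  have hdde : deriv (deriv e) t = deriv (deriv y) t - deriv (deriv y_d) t := by
    rw [hde]
    exact deriv_sub (hy' t) (hyd' t)
  have hsliding : HasDerivAt s (Δ t - Δhat t - k_C * s t) t := by
    have he_diff : Differentiable ℝ e := he ▸ hy.sub hyd
    have hde_diff : Differentiable ℝ (deriv e) := hde ▸ hy'.sub hyd'
    rw [← sub_add_mul_eq_of_control_law hb (hdyn t) (hu t), ← hdde, hs]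
    exact hasDerivAt_deriv_add_const_mul (he_diff t) (hde_diff t)
  have hweights : HasDerivAt What ((Γ * s t) • μ t) t := hupd t ▸ (hWhat t).hasDerivAt
  rw [hV]
  convert hsliding.half_sq_add_inv_mul_norm_sub_sq hweights using 1
  simp only [hΔ, hΔhat, inner_smul_right, inner_sub_left]
  field_simp [hΓ.ne']
  ring
end

section
/- Let n ∈ ℕ, λ, λ_D, b, k_C, k_SE, k_D ∈ ℝ with b ≠ 0, Γ > 0. Let y, y_d, ŷ : ℝ → ℝ be twice differentiable, f, ε : ℝ → ℝ, μ : ℝ → ℝⁿ, W ∈ ℝⁿ constant, Ŵ : ℝ → ℝⁿ differentiable. Define e = y − y_d, s = e' + λe, e_D = ŷ − y, s_D = e_D' + λ_D·e_D, Δ(t) = ⟨W, μ(t)⟩ + ε(t), Δ̂(t) = ⟨Ŵ(t), μ(t)⟩. Suppose: (i) y''(t) = f(t) + b·u(t) + Δ(t) with control law u(t) = b⁻¹(−f(t) − Δ̂(t) + y_d''(t) − k_C·s(t) − λ·e'(t)); (ii) the state estimator satisfies ŷ''(t) = f(t) + b·u(t) + Δ̂(t) − k_SE·s_D(t) − λ_D·e_D'(t);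 (iii) the composite updating rule Ŵ'(t) = Γ·μ(t)·(s(t) − k_D·s_D(t)) holds. Then the composite Lyapunov function V(t) = ½(s(t)² + k_D·s_D(t)² + Γ⁻¹‖Ŵ(t) − W‖²) is differentiable and satisfies V'(t) = s(t)·(−k_C·s(t) + ε(t)) + k_D·s_D(t)·(−k_SE·s_D(t) − ε(t)) for all t. -/
/-!
Along the closed loop the control law cancels everything in `ṡ` except the approximation
mismatch, `ṡ = Δ − Δ̂ − k_C s`, and the estimator gives `ṡ_D = Δ̂ − Δ − k_SE s_D`. Since
`Δ − Δ̂ = ε − ⟪Ŵ − W, μ⟫`, the weight-error parts of `s ṡ + k_D s_D ṡ_D` add up to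
`−(s − k_D s_D)⟪Ŵ − W, μ⟫`, which is exactly cancelled by `Γ⁻¹⟪Ŵ − W, Ŵ'⟫` under the
composite update rule.
-/

open scoped RealInnerProductSpace

theorem hasDerivAt_slidingSurface_of_sub {x z e : ℝ → ℝ}
    (hx : Differentiable ℝ x) (hx' : Differentiable ℝ (deriv x))
    (hz : Differentiable ℝ z) (hz' : Differentiable ℝ (deriv z))
    (he : e = fun r => x r - z r) (lam t : ℝ) :
    HasDerivAt (fun r => deriv e r + lam * e r)
      (deriv (deriv x) t - deriv (deriv z) t + lam * deriv e t) t := by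
  have hde : deriv e = fun r => deriv x r - deriv z r := by
    subst he
    funext r
    exact deriv_sub (hx r) (hz r)
  rw [hde]
  subst he
  exact ((hx' t).hasDerivAt.sub (hz' t).hasDerivAt).add
    (((hx t).hasDerivAt.sub (hz t).hasDerivAt).const_mul lam)

theorem hasDerivAt_compositeLyapunov {E : Type*} [NormedAddCommGroup E] [InnerProductSpace ℝ E]
    {s s_D : ℝ → ℝ} {What : ℝ → E} {s' s_D' t : ℝ} {What' : E} (W : E) (k Γ : ℝ)
    (hs : HasDerivAt s s' t) (hs_D : HasDerivAt s_D s_D' t) (hWhat : HasDerivAt What What' t) :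
    HasDerivAt (fun r => (1/2) * ((s r) ^ 2 + k * (s_D r) ^ 2 + Γ⁻¹ * ‖What r - W‖ ^ 2))
      (s t * s' + k * (s_D t * s_D') + Γ⁻¹ * ⟪What t - W, What'⟫) t := by
  have h := (((hs.pow 2).add ((hs_D.pow 2).const_mul k)).add
    ((hWhat.sub_const W).norm_sq.const_mul Γ⁻¹)).const_mul (1/2 : ℝ)
  refine h.congr_deriv ?_
  simp only [Nat.cast_ofNat]
  ring

/-- Composite learning method: with the control law, the state estimator, and
the composite update rule `Ŵ' = Γ·μ·(s − k_D·s_D)`, the composite Lyapunov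
function `V = ½(s² + k_D·s_D² + Γ⁻¹‖Ŵ − W‖²)` is differentiable with
`V' = s(−k_C s + ε) + k_D s_D(−k_SE s_D − ε)`. -/
theorem stmt_9 (n : ℕ) (lam lam_D b k_C k_SE k_D Γ : ℝ) (hb : b ≠ 0) (hΓ : 0 < Γ)
    (y y_d yhat : ℝ → ℝ)
    (hy : Differentiable ℝ y) (hy' : Differentiable ℝ (deriv y))
    (hyd : Differentiable ℝ y_d) (hyd' : Differentiable ℝ (deriv y_d))
    (hyhat : Differentiable ℝ yhat) (hyhat' : Differentiable ℝ (deriv yhat))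
    (f ε u : ℝ → ℝ) (μ : ℝ → EuclideanSpace ℝ (Fin n))
    (W : EuclideanSpace ℝ (Fin n)) (What : ℝ → EuclideanSpace ℝ (Fin n))
    (hWhat : Differentiable ℝ What)
    (e s e_D s_D Δ Δhat V : ℝ → ℝ)
    (he : e = fun t => y t - y_d t)
    (hs : s = fun t => deriv e t + lam * e t)
    (heD : e_D = fun t => yhat t - y t)
    (hsD : s_D = fun t => deriv e_D t + lam_D * e_D t)
    (hΔ : Δ = fun t => (inner ℝ W (μ t) : ℝ) + ε t)
    (hΔhat : Δhat = fun t => (inner ℝ (What t) (μ t) : ℝ))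
    (hdyn : ∀ t, deriv (deriv y) t = f t + b * u t + Δ t)
    (hu : ∀ t, u t = b⁻¹ * (-f t - Δhat t + deriv (deriv y_d) t
      - k_C * s t - lam * deriv e t))
    (hest : ∀ t, deriv (deriv yhat) t
      = f t + b * u t + Δhat t - k_SE * s_D t - lam_D * deriv e_D t)
    (hupd : ∀ t, deriv What t = (Γ * (s t - k_D * s_D t)) • μ t)
    (hV : V = fun t => (1/2) * ((s t) ^ 2 + k_D * (s_D t) ^ 2
      + Γ⁻¹ * ‖What t - W‖ ^ 2)) :
    ∀ t, HasDerivAt V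
      (s t * (-k_C * s t + ε t) + k_D * s_D t * (-k_SE * s_D t - ε t)) t := by
  intro t
  have hs' : HasDerivAt s (Δ t - Δhat t - k_C * s t) t := by
    have h := hasDerivAt_slidingSurface_of_sub hy hy' hyd hyd' he lam t
    rw [← hs] at h
    refine h.congr_deriv ?_
    rw [hdyn, hu, mul_inv_cancel_left₀ hb]
    ring
  have hs_D' : HasDerivAt s_D (Δhat t - Δ t - k_SE * s_D t) t := by
    have h := hasDerivAt_slidingSurface_of_sub hyhat hyhat' hy hy' heD lam_D t
    rw [← hsD] at h
    refine h.congr_deriv ?_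
    rw [hest, hdyn]
    ring
  have hV' := hasDerivAt_compositeLyapunov W k_D Γ hs' hs_D' (hWhat t).hasDerivAt
  rw [hV]
  refine hV'.congr_deriv ?_
  rw [hupd, hΔ, hΔhat, inner_smul_right, inner_sub_left]
  field_simp
  ring
end
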